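/- arXiv:1501.07121 — 2 statements merged into one kernel-verified Lean document; each statement's English description precedes it below -/
import Mathlib

section
/- On a simple tropical curve C with n ≥ 2 leaves, any exact 1-form is uniquely determined by its residues: if ω₁ and ω₂ are exact 1-forms on C with the same residues at all leaves, then ω₁ = ω₂. -/
/-!
The difference of two exact 1-forms with equal residues is an exact holomorphic
1-form, so it suffices to show that such a form `ω` vanishes. If not, some dart
carries a positive value. Balancing at internal vertices and vanishing residues at
leaves mean that the head of every positive dart is the tail of another positive dart,
so following positive darts in the finite graph eventually closes up into a loop. The
integral of `ω` over that loop is a sum of positive terms, contradicting exactness.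
-/

open Finset

section GraphSetup

variable {V D : Type} [Fintype V] [Fintype D] [DecidableEq V] [DecidableEq D]

/-- A loop in a graph given by darts: a nonempty cyclic chain of darts, injective on
(unoriented) edges.  `rev` is orientation reversal and `tail` the initial vertex of
a dart; the head of `d` is `tail (rev d)`. -/
def IsLoop (rev : D → D) (tail : D → V) (c : List D) : Prop :=
  c ≠ [] ∧ c.Nodup ∧ (∀ d ∈ c, rev d ∉ c) ∧
    c.Chain' (fun d d' => tail (rev d) = tail d') ∧
    ∀ a ∈ c.head?, ∀ b ∈ c.getLast?, tail (rev b) = tail a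

/-- The integral of a 1-form `ω` along a loop `c`: `Σ l(e)·ω(e⃗)`. -/
def loopIntegral (len : D → ℝ) (ω : D → ℝ) (c : List D) : ℝ :=
  (c.map fun d => len d * ω d).sum

/-- A 1-form on the graph: antisymmetric under orientation reversal and satisfying
the Kirchhoff balancing condition at every internal (non-leaf) vertex. -/
def IsBalanced (rev : D → D) (tail : D → V) (isLeaf : V → Prop) [DecidablePred isLeaf]
    (ω : D → ℝ) : Prop :=
  (∀ d, ω (rev d) = - ω d) ∧
    ∀ v, ¬ isLeaf v → ∑ d ∈ univ.filter (fun d => tail d = v), ω d = 0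

/-- A 1-form is exact if its integral over every loop vanishes. -/
def IsExact (rev : D → D) (tail : D → V) (len : D → ℝ) (ω : D → ℝ) : Prop :=
  ∀ c : List D, IsLoop rev tail c → loopIntegral len ω c = 0

/-- A 1-form is holomorphic if its residues (its values on leaf edges) all vanish. -/
def IsHolomorphic (tail : D → V) (isLeaf : V → Prop) (ω : D → ℝ) : Prop :=
  ∀ d, isLeaf (tail d) → ω d = 0

/-- Connectivity of the graph: any two vertices are joined by a chain of darts. -/
def GraphConnected (rev : D → D) (tail : D → V) : Prop :=
  ∀ v w : V, Relation.ReflTransGen (fun x y => ∃ d, tail d = x ∧ tail (rev d) = y) v w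

end GraphSetup

namespace Function

theorem exists_mem_periodicPts {α : Type*} [Finite α] [Nonempty α] (f : α → α) :
    ∃ x, x ∈ periodicPts f := by
  obtain ⟨m, n, hmn, hfmn⟩ :=
    Finite.exists_ne_map_eq_of_infinite fun k : ℕ => f^[k] (Classical.arbitrary α)
  wlog hlt : m < n generalizing m n
  · exact this n m hmn.symm hfmn.symm (by omega)
  refine ⟨f^[m] (Classical.arbitrary α), n - m, by omega, ?_⟩
  change f^[n - m] (f^[m] _) = _
  rw [← iterate_add_apply, Nat.sub_add_cancel hlt.le]
  exact hfmn.symm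

end Function

namespace List

theorem exists_nodup_isChain_closed {α : Type*} [Finite α] [Nonempty α] (R : α → α → Prop)
    (hR : ∀ a, ∃ b, R a b) :
    ∃ c : List α, c ≠ [] ∧ c.Nodup ∧ c.IsChain R ∧
      ∀ a ∈ c.head?, ∀ b ∈ c.getLast?, R b a := by
  choose f hf using hR
  obtain ⟨x, hx⟩ := Function.exists_mem_periodicPts f
  have hp := Function.minimalPeriod_pos_of_mem_periodicPts hx
  refine ⟨(range (Function.minimalPeriod f x)).map (f^[·] x), ?_, ?_, ?_, ?_⟩
  · simp [hp.ne']
  · exact (nodup_range).map_on fun i hi j hj hij =>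
      Function.iterate_injOn_Iio_minimalPeriod (by simpa using hi) (by simpa using hj) hij
  · rw [isChain_map, isChain_iff_getElem]
    intro k hk
    simpa [Function.iterate_succ_apply'] using hf (f^[k] x)
  · intro a ha b hb
    rw [head?_map, head?_range, if_neg hp.ne', Option.map_some, Option.mem_some_iff] at ha
    rw [getLast?_map, getLast?_range, if_neg hp.ne', Option.map_some,
      Option.mem_some_iff] at hb
    subst ha hb
    convert hf _
    rw [← Function.iterate_succ_apply' f, Nat.succ_eq_add_one, Nat.sub_add_cancel hp,
      Function.iterate_minimalPeriod, Function.iterate_zero_apply]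

end List

section ExactForms

variable {V D : Type} {rev : D → D} {tail : D → V} {isLeaf : V → Prop} {len ω ω' : D → ℝ}

theorem loopIntegral_sub (len ω ω' : D → ℝ) (c : List D) :
    loopIntegral len (ω - ω') c = loopIntegral len ω c - loopIntegral len ω' c := by
  simpa [loopIntegral, mul_sub] using
    Multiset.sum_map_sub (m := (c : Multiset D)) (f := fun d => len d * ω d)
      (g := fun d => len d * ω' d)

theorem IsBalanced.sub [Fintype D] [DecidableEq V] [DecidablePred isLeaf]
    (h : IsBalanced rev tail isLeaf ω) (h' : IsBalanced rev tail isLeaf ω') :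
    IsBalanced rev tail isLeaf (ω - ω') := by
  refine ⟨fun d => ?_, fun v hv => ?_⟩
  · simp only [Pi.sub_apply, h.1 d, h'.1 d, neg_sub_neg, neg_sub]
  · simp only [Pi.sub_apply, sum_sub_distrib, h.2 v hv, h'.2 v hv, sub_zero]

theorem IsExact.sub (h : IsExact rev tail len ω) (h' : IsExact rev tail len ω') :
    IsExact rev tail len (ω - ω') := fun c hc => by
  rw [loopIntegral_sub, h c hc, h' c hc, sub_zero]

theorem isHolomorphic_sub_iff :
    IsHolomorphic tail isLeaf (ω - ω') ↔ ∀ d, isLeaf (tail d) → ω d = ω' d := by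
  simp only [IsHolomorphic, Pi.sub_apply, sub_eq_zero]

theorem loopIntegral_pos (hlen : ∀ d, 0 < len d) {c : List D} (hc : c ≠ [])
    (hpos : ∀ d ∈ c, 0 < ω d) : 0 < loopIntegral len ω c :=
  List.sum_pos _ (by simpa using fun d hd => mul_pos (hlen d) (hpos d hd)) (by simpa using hc)

variable [Fintype D] [DecidableEq V] [DecidablePred isLeaf]

theorem IsBalanced.exists_pos_of_pos (hb : IsBalanced rev tail isLeaf ω)
    (hh : IsHolomorphic tail isLeaf ω) {d : D} (hd : 0 < ω d) :
    ∃ d', 0 < ω d' ∧ tail d' = tail (rev d) := by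
  have hrev : ω (rev d) < 0 := by rw [hb.1 d]; exact neg_neg_of_pos hd
  have hint : ¬ isLeaf (tail (rev d)) := fun hleaf => hrev.ne (hh _ hleaf)
  obtain ⟨d', hd', hpos⟩ := exists_pos_of_sum_zero_of_exists_nonzero ω (hb.2 _ hint)
    ⟨rev d, by simp, hrev.ne⟩
  exact ⟨d', hpos, (mem_filter.mp hd').2⟩

theorem IsBalanced.exists_isLoop_pos (hb : IsBalanced rev tail isLeaf ω)
    (hh : IsHolomorphic tail isLeaf ω) {d₀ : D} (hd₀ : 0 < ω d₀) :
    ∃ c, IsLoop rev tail c ∧ ∀ d ∈ c, 0 < ω d := by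
  have : Nonempty {d // 0 < ω d} := ⟨⟨d₀, hd₀⟩⟩
  obtain ⟨c, hne, hnodup, hchain, hclosed⟩ := List.exists_nodup_isChain_closed
    (fun d d' : {d // 0 < ω d} => tail (rev d) = tail d')
    fun d => by
      obtain ⟨d', hpos, htail⟩ := hb.exists_pos_of_pos hh d.2
      exact ⟨⟨d', hpos⟩, htail.symm⟩
  have hpos : ∀ d ∈ c.map Subtype.val, 0 < ω d := by
    simp only [List.mem_map]
    rintro _ ⟨d, -, rfl⟩
    exact d.2
  refine ⟨c.map Subtype.val, ⟨mt List.map_eq_nil_iff.mp hne, hnodup.map Subtype.val_injective,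
    fun d hd hrd => ?_, (List.isChain_map _).2 hchain, ?_⟩, hpos⟩
  · have := hpos _ hrd
    rw [hb.1 d] at this
    linarith [hpos d hd]
  · simp only [List.head?_map, List.getLast?_map, Option.mem_map]
    rintro _ ⟨a, ha, rfl⟩ _ ⟨b, hb, rfl⟩
    exact hclosed a ha b hb

theorem IsExact.eq_zero_of_isHolomorphic (hlen : ∀ d, 0 < len d)
    (hb : IsBalanced rev tail isLeaf ω) (he : IsExact rev tail len ω)
    (hh : IsHolomorphic tail isLeaf ω) : ω = 0 := by
  suffices hnonpos : ∀ d, ¬ 0 < ω d by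
    funext d
    have hrev := hb.1 d
    have hd := not_lt.mp (hnonpos d)
    have hrd := not_lt.mp (hnonpos (rev d))
    show ω d = 0
    linarith
  intro d hd
  obtain ⟨c, hc, hpos⟩ := hb.exists_isLoop_pos hh hd
  exact (loopIntegral_pos hlen hc.1 hpos).ne' (he c hc)

end ExactForms

theorem stmt5_general {V D : Type} [Fintype D] [DecidableEq V]
    (rev : D → D) (tail : D → V) (isLeaf : V → Prop) [DecidablePred isLeaf]
    (len : D → ℝ)
    (hlen : ∀ d, 0 < len d)
    (ω₁ ω₂ : D → ℝ)
    (h₁ : IsBalanced rev tail isLeaf ω₁) (h₂ : IsBalanced rev tail isLeaf ω₂)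
    (he₁ : IsExact rev tail len ω₁) (he₂ : IsExact rev tail len ω₂)
    (hres : ∀ d, isLeaf (tail d) → ω₁ d = ω₂ d) :
    ω₁ = ω₂ :=
  sub_eq_zero.mp <| (he₁.sub he₂).eq_zero_of_isHolomorphic hlen (h₁.sub h₂)
    (isHolomorphic_sub_iff.mpr hres)

/-- On a simple tropical curve with `n ≥ 2` leaves, an exact 1-form is uniquely
determined by its residues: two exact balanced 1-forms with the same residues at
all leaves are equal. -/
theorem stmt5 {V D : Type} [Fintype V] [Fintype D] [DecidableEq V] [DecidableEq D]
    (rev : D → D) (tail : D → V) (isLeaf : V → Prop) [DecidablePred isLeaf]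
    (len : D → ℝ) (n : ℕ)
    (hrev : ∀ d, rev (rev d) = d) (hrevne : ∀ d, rev d ≠ d)
    (hconn : GraphConnected rev tail)
    (hleaf : ∀ v, isLeaf v ↔ (univ.filter fun d => tail d = v).card = 1)
    (htri : ∀ v, ¬ isLeaf v → (univ.filter fun d => tail d = v).card = 3)
    (hlen : ∀ d, 0 < len d) (hlensym : ∀ d, len (rev d) = len d)
    (hn : (univ.filter fun v => isLeaf v).card = n) (hn2 : 2 ≤ n)
    (ω₁ ω₂ : D → ℝ)
    (h₁ : IsBalanced rev tail isLeaf ω₁) (h₂ : IsBalanced rev tail isLeaf ω₂)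
    (he₁ : IsExact rev tail len ω₁) (he₂ : IsExact rev tail len ω₂)
    (hres : ∀ d, isLeaf (tail d) → ω₁ d = ω₂ d) :
    ω₁ = ω₂ :=
  stmt5_general rev tail isLeaf len hlen ω₁ ω₂ h₁ h₂ he₁ he₂ hres
end

section
/- On a simple tropical curve C, the only exact 1-form that is also holomorphic (i.e., has all residues zero) is the zero form: Ω₀(C) ∩ Ω_H(C) = {0}. -/
open Finset

/-!
Exactness propagates from loops to all closed walks: a closed walk that is not a loop repeats
a dart or traverses a dart and later its reverse, and cutting it there yields two shorter closed
walks with the same total integral. On a connected graph, `ω` is then the differential of a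
potential `f`, i.e. `f (head d) - f (tail d) = len d * ω d`. Holomorphicity makes the Kirchhoff
condition hold at leaves too, so `∑ d, ω d * g (tail d) = 0` for every `g : V → ℝ`; taking
`g = f` and using antisymmetry gives `∑ d, len d * ω d ^ 2 = 0`, hence `ω = 0`.
-/

namespace TropicalCurve

variable {V D : Type} (rev : D → D) (tail : D → V)

inductive IsWalk : V → V → List D → Prop
  | nil (v : V) : IsWalk v v []
  | cons {u w : V} {d : D} {c : List D} :
      tail d = u → IsWalk (tail (rev d)) w c → IsWalk u w (d :: c)

variable {rev tail}

theorem isWalk_cons_iff {u w : V} {d : D} {c : List D} :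
    IsWalk rev tail u w (d :: c) ↔ tail d = u ∧ IsWalk rev tail (tail (rev d)) w c :=
  ⟨fun | .cons hd h => ⟨hd, h⟩, fun ⟨hd, h⟩ => .cons hd h⟩

theorem isWalk_append_iff {u w : V} {a b : List D} :
    IsWalk rev tail u w (a ++ b) ↔ ∃ v, IsWalk rev tail u v a ∧ IsWalk rev tail v w b := by
  induction a generalizing u with
  | nil => exact ⟨fun h => ⟨u, .nil u, h⟩, fun ⟨_, .nil _, h⟩ => h⟩
  | cons d a ih =>
    constructor
    · rintro (_ | ⟨hd, h⟩)
      obtain ⟨v, ha, hb⟩ := ih.mp h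
      exact ⟨v, .cons hd ha, hb⟩
    · rintro ⟨v, _ | ⟨hd, ha⟩, hb⟩
      exact .cons hd (ih.mpr ⟨v, ha, hb⟩)

theorem IsWalk.append {u v w : V} {a b : List D} (ha : IsWalk rev tail u v a)
    (hb : IsWalk rev tail v w b) : IsWalk rev tail u w (a ++ b) :=
  isWalk_append_iff.mpr ⟨v, ha, hb⟩

theorem IsWalk.rotate {v : V} {a b : List D} (h : IsWalk rev tail v v (a ++ b)) :
    ∃ u, IsWalk rev tail u u (b ++ a) := by
  obtain ⟨u, ha, hb⟩ := isWalk_append_iff.mp h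
  exact ⟨u, hb.append ha⟩

theorem IsWalk.reverse (hrev : Function.Involutive rev) {v w : V} {c : List D}
    (h : IsWalk rev tail v w c) : IsWalk rev tail w v (c.map rev).reverse := by
  induction h with
  | nil v => exact .nil v
  | @cons u w d c hd _ ih =>
    rw [List.map_cons, List.reverse_cons]
    exact ih.append (.cons rfl (by rw [hrev, hd]; exact .nil u))

theorem IsWalk.isChain {v w : V} {c : List D} (h : IsWalk rev tail v w c) :
    c.IsChain (fun d d' => tail (rev d) = tail d') ∧ (∀ a ∈ c.head?, tail a = v) ∧
      ∀ b ∈ c.getLast?, tail (rev b) = w := by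
  induction h with
  | nil => simp
  | @cons u w d c hd hw ih =>
    obtain ⟨hc, hhead, hlast⟩ := ih
    rcases c with _ | ⟨d', c⟩
    · cases hw
      simpa using hd
    · refine ⟨List.isChain_cons_cons.mpr ⟨(hhead d' rfl).symm, hc⟩, by simpa using hd,
        fun b hb => hlast b ?_⟩
      rwa [List.getLast?_cons_cons] at hb

theorem IsWalk.isLoop {v : V} {c : List D} (h : IsWalk rev tail v v c) (hne : c ≠ [])
    (hnd : c.Nodup) (hrevc : ∀ d ∈ c, rev d ∉ c) : IsLoop rev tail c := by
  obtain ⟨hc, hhead, hlast⟩ := h.isChain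
  exact ⟨hne, hnd, hrevc, hc, fun a ha b hb => (hlast b hb).trans (hhead a ha).symm⟩

theorem exists_isWalk (hconn : GraphConnected rev tail) (v w : V) :
    ∃ c, IsWalk rev tail v w c := by
  induction hconn v w using Relation.ReflTransGen.head_induction_on with
  | refl => exact ⟨[], .nil w⟩
  | head hstep _ ih =>
    obtain ⟨d, hd, rfl⟩ := hstep
    obtain ⟨c, hc⟩ := ih
    exact ⟨d :: c, .cons hd hc⟩

section Integral

variable (len ω : D → ℝ)

@[simp]
theorem loopIntegral_nil : loopIntegral len ω [] = 0 := rfl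

@[simp]
theorem loopIntegral_cons (d : D) (c : List D) :
    loopIntegral len ω (d :: c) = len d * ω d + loopIntegral len ω c := by
  simp [loopIntegral]

@[simp]
theorem loopIntegral_append (a b : List D) :
    loopIntegral len ω (a ++ b) = loopIntegral len ω a + loopIntegral len ω b := by
  simp [loopIntegral]

variable {len ω}

theorem loopIntegral_map_rev_reverse (hω : ∀ d, ω (rev d) = -ω d)
    (hlen : ∀ d, len (rev d) = len d) (c : List D) :
    loopIntegral len ω (c.map rev).reverse = -loopIntegral len ω c := by
  induction c with
  | nil => simp
  | cons d c ih => simp [ih, hω, hlen]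

end Integral

theorem _root_.List.exists_eq_append_cons_mem_of_not_nodup {α : Type*} {l : List α}
    (h : ¬l.Nodup) : ∃ a x b, l = a ++ x :: b ∧ x ∈ b := by
  induction l with
  | nil => exact absurd .nil h
  | cons y l ih =>
    rw [List.nodup_cons, not_and_or, not_not] at h
    rcases h with hy | hl
    · exact ⟨[], y, l, rfl, hy⟩
    · obtain ⟨a, x, b, rfl, hx⟩ := ih hl
      exact ⟨y :: a, x, b, rfl, hx⟩

theorem exists_eq_append_cons_of_not_isLoop (hrevne : ∀ d, rev d ≠ d) {c : List D}
    (h : ¬(c.Nodup ∧ ∀ d ∈ c, rev d ∉ c)) :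
    ∃ a d b, c = a ++ d :: b ∧ (d ∈ b ++ a ∨ rev d ∈ b ++ a) := by
  rw [not_and_or] at h
  rcases h with hnd | hrevc
  · obtain ⟨a, d, b, rfl, hd⟩ := List.exists_eq_append_cons_mem_of_not_nodup hnd
    exact ⟨a, d, b, rfl, .inl (List.mem_append_left a hd)⟩
  · push Not at hrevc
    obtain ⟨d, hd, hrd⟩ := hrevc
    obtain ⟨a, b, rfl⟩ := List.append_of_mem hd
    refine ⟨a, d, b, rfl, .inr ?_⟩
    simp only [List.mem_append, List.mem_cons, hrevne d, false_or] at hrd ⊢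
    exact hrd.symm

variable {len ω : D → ℝ}

theorem loopIntegral_eq_zero_of_isWalk (he : IsExact rev tail len ω)
    (hrev : Function.Involutive rev) (hrevne : ∀ d, rev d ≠ d) (hω : ∀ d, ω (rev d) = -ω d)
    (hlen : ∀ d, len (rev d) = len d) {v : V} {c : List D} (h : IsWalk rev tail v v c) :
    loopIntegral len ω c = 0 := by
  rcases eq_or_ne c [] with rfl | hne
  · rfl
  by_cases hloop : c.Nodup ∧ ∀ d ∈ c, rev d ∉ c
  · exact he c (h.isLoop hne hloop.1 hloop.2)
  obtain ⟨a, d, b, rfl, hd⟩ := exists_eq_append_cons_of_not_isLoop hrevne hloop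
  obtain ⟨u, hrot⟩ := h.rotate
  rw [List.cons_append] at hrot
  have hrot_eq : loopIntegral len ω (a ++ d :: b) = loopIntegral len ω (d :: (b ++ a)) := by
    simp only [loopIntegral_append, loopIntegral_cons]; ring
  rw [hrot_eq]
  rcases hd with hd | hd
  · obtain ⟨e, f, hef⟩ := List.append_of_mem hd
    rw [hef] at hrot ⊢
    rw [← List.cons_append] at hrot
    obtain ⟨w, hde, hdf⟩ := isWalk_append_iff.mp hrot
    obtain rfl : u = w := ((isWalk_cons_iff.mp hde).1.symm.trans (isWalk_cons_iff.mp hdf).1)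
    have := loopIntegral_eq_zero_of_isWalk he hrev hrevne hω hlen hde
    have := loopIntegral_eq_zero_of_isWalk he hrev hrevne hω hlen hdf
    simp_all
  · obtain ⟨e, f, hef⟩ := List.append_of_mem hd
    rw [hef] at hrot ⊢
    obtain ⟨rfl, hrot⟩ := isWalk_cons_iff.mp hrot
    obtain ⟨w, hew, hrf⟩ := isWalk_append_iff.mp hrot
    obtain ⟨rfl, hf⟩ := isWalk_cons_iff.mp hrf
    rw [hrev] at hf
    have := loopIntegral_eq_zero_of_isWalk he hrev hrevne hω hlen hew
    have := loopIntegral_eq_zero_of_isWalk he hrev hrevne hω hlen hf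
    simp_all
termination_by c.length
decreasing_by all_goals (subst_vars; have := congrArg List.length hef; simp at this ⊢; omega)

theorem loopIntegral_eq_of_isWalk (hrev : Function.Involutive rev)
    (hω : ∀ d, ω (rev d) = -ω d) (hlen : ∀ d, len (rev d) = len d)
    (hclosed : ∀ {v c}, IsWalk rev tail v v c → loopIntegral len ω c = 0) {u w : V}
    {c₁ c₂ : List D} (h₁ : IsWalk rev tail u w c₁) (h₂ : IsWalk rev tail u w c₂) :
    loopIntegral len ω c₁ = loopIntegral len ω c₂ := by
  have := hclosed (h₁.append (h₂.reverse hrev))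
  rw [loopIntegral_append, loopIntegral_map_rev_reverse hω hlen] at this
  linarith

theorem exists_potential (hconn : GraphConnected rev tail) (hrev : Function.Involutive rev)
    (hω : ∀ d, ω (rev d) = -ω d) (hlen : ∀ d, len (rev d) = len d)
    (hclosed : ∀ {v c}, IsWalk rev tail v v c → loopIntegral len ω c = 0) :
    ∃ f : V → ℝ, ∀ d, f (tail (rev d)) = f (tail d) + len d * ω d := by
  cases isEmpty_or_nonempty V with
  | inl _ => exact ⟨0, fun d => isEmptyElim (tail d)⟩
  | inr hV =>
    obtain ⟨v₀⟩ := hV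
    choose p hp using exists_isWalk hconn v₀
    refine ⟨fun v => loopIntegral len ω (p v), fun d => ?_⟩
    have hpd : IsWalk rev tail v₀ (tail (rev d)) (p (tail d) ++ [d]) :=
      (hp (tail d)).append (.cons rfl (.nil _))
    exact (loopIntegral_eq_of_isWalk hrev hω hlen hclosed (hp _) hpd).trans (by simp)

section Kirchhoff

variable [Fintype D]

theorem sum_mul_comp_head_eq_neg (hrev : Function.Involutive rev) (hω : ∀ d, ω (rev d) = -ω d)
    (g : V → ℝ) : ∑ d, ω d * g (tail (rev d)) = -∑ d, ω d * g (tail d) := by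
  rw [← Equiv.sum_comp (hrev.toPerm rev), ← sum_neg_distrib]
  refine sum_congr rfl fun d _ => ?_
  simp only [Function.Involutive.coe_toPerm, hrev d, hω, neg_mul]

variable [DecidableEq V]

theorem sum_mul_comp_tail_eq_zero
    (hbal : ∀ v, ∑ d ∈ univ.filter (fun d => tail d = v), ω d = 0) (g : V → ℝ) :
    ∑ d, ω d * g (tail d) = 0 := by
  have hmaps : ∀ d ∈ (univ : Finset D), tail d ∈ univ.image tail :=
    fun d _ => mem_image_of_mem tail (mem_univ d)
  rw [← sum_fiberwise_of_maps_to hmaps]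
  refine sum_eq_zero fun v _ => ?_
  rw [sum_congr rfl fun d hd => by rw [(mem_filter.mp hd).2], ← sum_mul, hbal v, zero_mul]

theorem eq_zero_of_potential (hlen : ∀ d, 0 < len d) (hrev : Function.Involutive rev)
    (hω : ∀ d, ω (rev d) = -ω d)
    (hbal : ∀ v, ∑ d ∈ univ.filter (fun d => tail d = v), ω d = 0) {f : V → ℝ}
    (hf : ∀ d, f (tail (rev d)) = f (tail d) + len d * ω d) : ω = 0 := by
  have henergy : ∑ d, len d * ω d ^ 2 = 0 := calc
    ∑ d, len d * ω d ^ 2 = ∑ d, ω d * f (tail (rev d)) - ∑ d, ω d * f (tail d) := by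
      rw [← sum_sub_distrib]; exact sum_congr rfl fun d _ => by rw [hf]; ring
    _ = 0 := by
      rw [sum_mul_comp_head_eq_neg hrev hω, sum_mul_comp_tail_eq_zero hbal]; simp
  ext d
  have hterm := (sum_eq_zero_iff_of_nonneg fun d _ => mul_nonneg (hlen d).le (sq_nonneg _)).mp
    henergy d (mem_univ d)
  simpa [(hlen d).ne'] using hterm

theorem _root_.IsBalanced.sum_filter_tail_eq_zero {isLeaf : V → Prop} [DecidablePred isLeaf]
    (hb : IsBalanced rev tail isLeaf ω) (hh : IsHolomorphic tail isLeaf ω) (v : V) :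
    ∑ d ∈ univ.filter (fun d => tail d = v), ω d = 0 := by
  by_cases hv : isLeaf v
  · exact sum_eq_zero fun d hd => hh d ((mem_filter.mp hd).2 ▸ hv)
  · exact hb.2 v hv

end Kirchhoff

end TropicalCurve

theorem stmt6_general {V D : Type} [Fintype D] [DecidableEq V]
    (rev : D → D) (tail : D → V) (isLeaf : V → Prop) [DecidablePred isLeaf]
    (len : D → ℝ)
    (hrev : ∀ d, rev (rev d) = d) (hrevne : ∀ d, rev d ≠ d)
    (hconn : GraphConnected rev tail)
    (hlen : ∀ d, 0 < len d) (hlensym : ∀ d, len (rev d) = len d)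
    (ω : D → ℝ)
    (hb : IsBalanced rev tail isLeaf ω)
    (he : IsExact rev tail len ω)
    (hh : IsHolomorphic tail isLeaf ω) :
    ω = 0 := by
  obtain ⟨f, hf⟩ := TropicalCurve.exists_potential hconn hrev hb.1 hlensym
    (TropicalCurve.loopIntegral_eq_zero_of_isWalk he hrev hrevne hb.1 hlensym)
  exact TropicalCurve.eq_zero_of_potential hlen hrev hb.1 (hb.sum_filter_tail_eq_zero hh) hf

/-- On a simple tropical curve, the only exact 1-form that is also holomorphic
(all residues zero) is the zero form: `Ω₀(C) ∩ Ω_H(C) = {0}`. -/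
theorem stmt6 {V D : Type} [Fintype V] [Fintype D] [DecidableEq V] [DecidableEq D]
    (rev : D → D) (tail : D → V) (isLeaf : V → Prop) [DecidablePred isLeaf]
    (len : D → ℝ)
    (hrev : ∀ d, rev (rev d) = d) (hrevne : ∀ d, rev d ≠ d)
    (hconn : GraphConnected rev tail)
    (hleaf : ∀ v, isLeaf v ↔ (univ.filter fun d => tail d = v).card = 1)
    (htri : ∀ v, ¬ isLeaf v → (univ.filter fun d => tail d = v).card = 3)
    (hlen : ∀ d, 0 < len d) (hlensym : ∀ d, len (rev d) = len d)
    (ω : D → ℝ)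
    (hb : IsBalanced rev tail isLeaf ω)
    (he : IsExact rev tail len ω)
    (hh : IsHolomorphic tail isLeaf ω) :
    ω = 0 :=
  stmt6_general rev tail isLeaf len hrev hrevne hconn hlen hlensym ω hb he hh
end
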